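/- Let c ∈ C with c₁,c₂ ≤ c₃ ≤ c₁+c₂, m ≥ 1 with μ(c) ≥ m, and set δ = π^{c₁+c₂−c₃−m} ∈ O_m. Then the map η sending a matrix in P_{c−mρ} with diagonal (t₁,t₂,t₃), (2,1)-entry π^{c₁−m}x, (3,1)-entry π^{c₃−m}z, (3,2)-entry π^{c₂−m}y to the element of B^δ_m with the same diagonal and entries x, y, z (all reduced mod 𝔪^m) is a surjective group homomorphism from P_{c−mρ} onto B^δ_m. -/

import Mathlib

/-!
Write the lower entries of `g ∈ P_d` as `π^{d₁} x`, `π^{d₃} z`, `π^{d₂} y`. Expanding a product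
`g h`, its lower entries are again of this shape, and the new `x, y, z` are those of `B^δ_m` up to
terms carrying `π^{d₃-d₁}` or `π^{d₃-d₂}`, which vanish mod `𝔪^m` when `d = c - mρ` and `μ(c) ≥ m`,
while `π^{d₁+d₂-d₃}` is exactly `δ`. Modulo `𝔪^m` every element of `P_d` is upper triangular, so the
diagonal entries multiply and are units there. For surjectivity take lower triangular lifts, whose
diagonal can be chosen in `Oˣ` because `O` is local.
-/

open Matrix

/-- Elements of `B^δ_m`: a triple `(x,y,z) ∈ R³` together with unit diagonal
`(t₁,t₂,t₃) ∈ (Rˣ)³`. -/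
abbrev BType (R : Type*) [CommRing R] := (R × R × R) × (Rˣ × Rˣ × Rˣ)

/-- Multiplication of `B^δ_m` (in the matrix presentation): the product of
`((x,y,z),(t₁,t₂,t₃))` and `((x',y',z'),(t₁',t₂',t₃'))` is
`((xt₁'+t₂x', yt₂'+t₃y', zt₁'+δyx'+t₃z'), (t₁t₁',t₂t₂',t₃t₃'))`. -/
def bMul {R : Type*} [CommRing R] (δ : R) (a b : BType R) : BType R :=
  ((a.1.1 * (b.2.1 : R) + (a.2.2.1 : R) * b.1.1,
    a.1.2.1 * (b.2.2.1 : R) + (a.2.2.2 : R) * b.1.2.1,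
    a.1.2.2 * (b.2.1 : R) + δ * a.1.2.1 * b.1.1 + (a.2.2.2 : R) * b.1.2.2),
   (a.2.1 * b.2.1, a.2.2.1 * b.2.2.1, a.2.2.2 * b.2.2.2))

/-- The parahoric-type subgroup `P_d ⊆ GL₃(O)`: matrices whose `(2,1)`-entry lies in
`𝔪^{d₁}`, `(3,1)`-entry in `𝔪^{d₃}` and `(3,2)`-entry in `𝔪^{d₂}` (1-based indices). -/
def pSet {O : Type*} [CommRing O] (π : O) (d₁ d₂ d₃ : ℕ) : Set (GL (Fin 3) O) :=
  {g | g.val 1 0 ∈ (Ideal.span {π} : Ideal O) ^ d₁ ∧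
    g.val 2 0 ∈ (Ideal.span {π} : Ideal O) ^ d₃ ∧
    g.val 2 1 ∈ (Ideal.span {π} : Ideal O) ^ d₂}

section Cofactor

variable {M : Type*} [MonoidWithZero M]

open Classical in
/-- The `x` with `a = b * x`; junk value `0` when `b ∤ a`. -/
noncomputable def cofactor (b a : M) : M :=
  if h : b ∣ a then h.choose else 0

theorem cofactor_eq [IsLeftCancelMulZero M] {a b x : M} (hb : b ≠ 0) (h : a = b * x) :
    cofactor b a = x := by
  have hdvd : b ∣ a := ⟨x, h⟩
  rw [cofactor, dif_pos hdvd]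
  exact mul_left_cancel₀ hb (hdvd.choose_spec.symm.trans h)

end Cofactor

section UnitOrOne

variable {M : Type*} [Monoid M]

open Classical in
noncomputable def unitOrOne (a : M) : Mˣ :=
  if h : IsUnit a then h.unit else 1

theorem val_unitOrOne {a : M} (h : IsUnit a) : (unitOrOne a : M) = a := by
  rw [unitOrOne, dif_pos h, IsUnit.unit_spec]

end UnitOrOne

namespace Matrix.IsUpperTriangular

variable {n R : Type*} [Fintype n] [LinearOrder n]

theorem mul_apply_self [NonUnitalNonAssocSemiring R] {A B : Matrix n n R}
    (hA : A.IsUpperTriangular) (hB : B.IsUpperTriangular) (i : n) :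
    (A * B) i i = A i i * B i i := by
  rw [mul_apply, Finset.sum_eq_single i]
  · intro k _ hki
    rcases hki.lt_or_gt with hki | hik
    · rw [hA hki, zero_mul]
    · rw [hB hik, mul_zero]
  · simp

theorem isUnit_apply_self [CommRing R] {A : Matrix n n R} (hA : A.IsUpperTriangular)
    (hdet : IsUnit A.det) (i : n) : IsUnit (A i i) := by
  classical
  rw [det_of_isUpperTriangular hA] at hdet
  exact isUnit_of_dvd_unit (Finset.dvd_prod_of_mem (fun j ↦ A j j) (Finset.mem_univ i)) hdet

end Matrix.IsUpperTriangular

namespace Matrix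

variable {R : Type*} [CommRing R] {π : R} {d₁ d₂ d₃ : ℕ}
  {A B : Matrix (Fin 3) (Fin 3) R} {xA yA zA xB yB zB : R}

theorem mul_apply_one_zero_of_pow_mul (h : d₁ ≤ d₃) (hxA : A 1 0 = π ^ d₁ * xA)
    (hxB : B 1 0 = π ^ d₁ * xB) (hzB : B 2 0 = π ^ d₃ * zB) :
    (A * B) 1 0 = π ^ d₁ * (xA * B 0 0 + A 1 1 * xB + π ^ (d₃ - d₁) * (A 1 2 * zB)) := by
  rw [mul_apply, Fin.sum_univ_three, hxA, hxB, hzB, ← pow_mul_pow_sub π h]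
  ring

theorem mul_apply_two_one_of_pow_mul (h : d₂ ≤ d₃) (hzA : A 2 0 = π ^ d₃ * zA)
    (hyA : A 2 1 = π ^ d₂ * yA) (hyB : B 2 1 = π ^ d₂ * yB) :
    (A * B) 2 1 = π ^ d₂ * (π ^ (d₃ - d₂) * (zA * B 0 1) + yA * B 1 1 + A 2 2 * yB) := by
  rw [mul_apply, Fin.sum_univ_three, hzA, hyA, hyB, ← pow_mul_pow_sub π h]
  ring

theorem mul_apply_two_zero_of_pow_mul (h : d₃ ≤ d₁ + d₂) (hzA : A 2 0 = π ^ d₃ * zA)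
    (hyA : A 2 1 = π ^ d₂ * yA) (hxB : B 1 0 = π ^ d₁ * xB) (hzB : B 2 0 = π ^ d₃ * zB) :
    (A * B) 2 0 = π ^ d₃ * (zA * B 0 0 + π ^ (d₁ + d₂ - d₃) * (yA * xB) + A 2 2 * zB) := by
  have hpow : π ^ d₂ * π ^ d₁ = π ^ d₃ * π ^ (d₁ + d₂ - d₃) := by
    rw [← pow_add, ← pow_add]
    congr 1
    omega
  rw [mul_apply, Fin.sum_univ_three, hzA, hyA, hxB, hzB]
  linear_combination (yA * xB) * hpow

end Matrix

theorem Ideal.Quotient.mk_pow_eq_zero_of_le {R : Type*} [CommRing R] {π : R} {m k : ℕ}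
    (hk : m ≤ k) : Ideal.Quotient.mk (Ideal.span {π} ^ m) (π ^ k) = 0 :=
  Ideal.Quotient.eq_zero_iff_mem.mpr
    (Ideal.pow_le_pow_right hk (Ideal.pow_mem_pow (Ideal.mem_span_singleton_self π) k))

section PSet

variable {O : Type*} [CommRing O] {π : O} {d₁ d₂ d₃ m : ℕ}

theorem mem_pSet_iff {g : GL (Fin 3) O} :
    g ∈ pSet π d₁ d₂ d₃ ↔ π ^ d₁ ∣ g.val 1 0 ∧ π ^ d₃ ∣ g.val 2 0 ∧ π ^ d₂ ∣ g.val 2 1 := by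
  simp only [pSet, Set.mem_ofPred_eq, Ideal.span_singleton_pow, Ideal.mem_span_singleton]

theorem isUpperTriangular_map_mk_of_mem_pSet (h₁ : m ≤ d₁) (h₂ : m ≤ d₂) (h₃ : m ≤ d₃)
    {g : GL (Fin 3) O} (hg : g ∈ pSet π d₁ d₂ d₃) :
    (g.val.map (Ideal.Quotient.mk (Ideal.span {π} ^ m))).IsUpperTriangular := by
  obtain ⟨hg₁, hg₃, hg₂⟩ := hg
  intro i j hji
  rw [map_apply, Ideal.Quotient.eq_zero_iff_mem]
  fin_cases i <;> fin_cases j <;> simp at hji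
  · exact Ideal.pow_le_pow_right h₁ hg₁
  · exact Ideal.pow_le_pow_right h₃ hg₃
  · exact Ideal.pow_le_pow_right h₂ hg₂

end PSet

namespace Parahoric

variable {O : Type*} [CommRing O] {π : O} {d₁ d₂ d₃ m : ℕ}

variable (π d₁ d₂ d₃ m) in
/-- The map `η` of the paper, extended to all of `GL₃(O)` by junk values. -/
noncomputable def eta (g : GL (Fin 3) O) : BType (O ⧸ Ideal.span {π} ^ m) :=
  let q := Ideal.Quotient.mk (Ideal.span {π} ^ m)
  ((q (cofactor (π ^ d₁) (g.val 1 0)), q (cofactor (π ^ d₂) (g.val 2 1)),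
      q (cofactor (π ^ d₃) (g.val 2 0))),
    (unitOrOne (q (g.val 0 0)), unitOrOne (q (g.val 1 1)), unitOrOne (q (g.val 2 2))))

theorem eta_fst [IsDomain O] (hπ : π ≠ 0) {g : GL (Fin 3) O} {x y z : O}
    (hx : g.val 1 0 = π ^ d₁ * x) (hy : g.val 2 1 = π ^ d₂ * y) (hz : g.val 2 0 = π ^ d₃ * z) :
    (eta π d₁ d₂ d₃ m g).1 =
      (Ideal.Quotient.mk _ x, Ideal.Quotient.mk _ y, Ideal.Quotient.mk _ z) := by
  simp only [eta, cofactor_eq (pow_ne_zero _ hπ) hx, cofactor_eq (pow_ne_zero _ hπ) hy,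
    cofactor_eq (pow_ne_zero _ hπ) hz]

theorem val_eta_snd {g : GL (Fin 3) O}
    (hg : (g.val.map (Ideal.Quotient.mk (Ideal.span {π} ^ m))).IsUpperTriangular) :
    ((eta π d₁ d₂ d₃ m g).2.1 : O ⧸ Ideal.span {π} ^ m) = Ideal.Quotient.mk _ (g.val 0 0) ∧
    ((eta π d₁ d₂ d₃ m g).2.2.1 : O ⧸ Ideal.span {π} ^ m) = Ideal.Quotient.mk _ (g.val 1 1) ∧
    ((eta π d₁ d₂ d₃ m g).2.2.2 : O ⧸ Ideal.span {π} ^ m) = Ideal.Quotient.mk _ (g.val 2 2) := by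
  have hdet : IsUnit (g.val.map (Ideal.Quotient.mk (Ideal.span {π} ^ m))).det := by
    rw [← RingHom.mapMatrix_apply, ← RingHom.map_det]
    exact (isUnits_det_units g).map _
  exact ⟨val_unitOrOne (hg.isUnit_apply_self hdet 0), val_unitOrOne (hg.isUnit_apply_self hdet 1),
    val_unitOrOne (hg.isUnit_apply_self hdet 2)⟩

theorem eta_mul [IsDomain O] (hπ : π ≠ 0) (h₁ : d₁ + m ≤ d₃) (h₂ : d₂ + m ≤ d₃)
    (h₃ : d₃ ≤ d₁ + d₂) {g h : GL (Fin 3) O} (hg : g ∈ pSet π d₁ d₂ d₃)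
    (hh : h ∈ pSet π d₁ d₂ d₃) :
    eta π d₁ d₂ d₃ m (g * h) = bMul (Ideal.Quotient.mk _ (π ^ (d₁ + d₂ - d₃)))
      (eta π d₁ d₂ d₃ m g) (eta π d₁ d₂ d₃ m h) := by
  obtain ⟨⟨xg, hxg⟩, ⟨zg, hzg⟩, ⟨yg, hyg⟩⟩ := mem_pSet_iff.mp hg
  obtain ⟨⟨xh, hxh⟩, ⟨zh, hzh⟩, ⟨yh, hyh⟩⟩ := mem_pSet_iff.mp hh
  have hX := Matrix.mul_apply_one_zero_of_pow_mul (by omega) hxg hxh hzh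
  have hY := Matrix.mul_apply_two_one_of_pow_mul (by omega) hzg hyg hyh
  have hZ := Matrix.mul_apply_two_zero_of_pow_mul h₃ hzg hyg hxh hzh
  rw [← Units.val_mul] at hX hY hZ
  have htri {k : GL (Fin 3) O} (hk : k ∈ pSet π d₁ d₂ d₃) :=
    isUpperTriangular_map_mk_of_mem_pSet (m := m) (by omega) (by omega) (by omega) hk
  have hgh : g * h ∈ pSet π d₁ d₂ d₃ := mem_pSet_iff.mpr ⟨⟨_, hX⟩, ⟨_, hZ⟩, ⟨_, hY⟩⟩
  have hdiag (i : Fin 3) := (htri hg).mul_apply_self (htri hh) i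
  simp only [← Matrix.map_mul, Matrix.map_apply] at hdiag
  have hsnd {k : GL (Fin 3) O} (hk : k ∈ pSet π d₁ d₂ d₃) :=
    val_eta_snd (d₁ := d₁) (d₂ := d₂) (d₃ := d₃) (htri hk)
  obtain ⟨GH₁, GH₂, GH₃⟩ := hsnd hgh
  obtain ⟨G₁, G₂, G₃⟩ := hsnd hg
  obtain ⟨H₁, H₂, H₃⟩ := hsnd hh
  refine Prod.ext ?_ (Prod.ext (Units.ext ?_) (Prod.ext (Units.ext ?_) (Units.ext ?_)))
  · simp only [bMul, eta_fst hπ hX hY hZ, eta_fst hπ hxg hyg hzg, eta_fst hπ hxh hyh hzh,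
      G₂, G₃, H₁, H₂, map_add, map_mul,
      Ideal.Quotient.mk_pow_eq_zero_of_le (by omega : m ≤ d₃ - d₁),
      Ideal.Quotient.mk_pow_eq_zero_of_le (by omega : m ≤ d₃ - d₂)]
    simp only [zero_mul, add_zero, zero_add, mul_assoc]
  · simp only [bMul, Units.val_mul, GH₁, G₁, H₁, hdiag]
  · simp only [bMul, Units.val_mul, GH₂, G₂, H₂, hdiag]
  · simp only [bMul, Units.val_mul, GH₃, G₃, H₃, hdiag]

theorem exists_mem_pSet_eta_eq [IsDomain O] [IsLocalRing O] (hπ : π ≠ 0)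
    (hm : Ideal.span {π} ^ m ≠ ⊤) (b : BType (O ⧸ Ideal.span {π} ^ m)) :
    ∃ g ∈ pSet π d₁ d₂ d₃, eta π d₁ d₂ d₃ m g = b := by
  have : Nontrivial (O ⧸ Ideal.span {π} ^ m) := Ideal.Quotient.nontrivial_iff.mpr hm
  have hmk := Ideal.Quotient.mk_surjective (I := Ideal.span {π} ^ m)
  have hunits := IsLocalRing.surjective_units_map_of_local_ringHom _ hmk
    (IsLocalHom.of_surjective _ hmk)
  obtain ⟨⟨x, y, z⟩, t₁, t₂, t₃⟩ := b
  obtain ⟨x, rfl⟩ := hmk x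
  obtain ⟨y, rfl⟩ := hmk y
  obtain ⟨z, rfl⟩ := hmk z
  obtain ⟨u₁, rfl⟩ := hunits t₁
  obtain ⟨u₂, rfl⟩ := hunits t₂
  obtain ⟨u₃, rfl⟩ := hunits t₃
  let M : Matrix (Fin 3) (Fin 3) O :=
    !![(u₁ : O), 0, 0; π ^ d₁ * x, u₂, 0; π ^ d₃ * z, π ^ d₂ * y, u₃]
  have hdet : IsUnit M.det := by simp [M, det_fin_three]
  let g := nonsingInvUnit M hdet
  have hg : g ∈ pSet π d₁ d₂ d₃ := mem_pSet_iff.mpr ⟨⟨x, rfl⟩, ⟨z, rfl⟩, ⟨y, rfl⟩⟩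
  refine ⟨g, hg, Prod.ext (eta_fst hπ rfl rfl rfl) ?_⟩
  refine Prod.ext (Units.ext ?_) (Prod.ext (Units.ext ?_) (Units.ext ?_)) <;>
    exact val_unitOrOne ((Units.isUnit _).map _)

end Parahoric

open Parahoric in
theorem stmt_14_general (O : Type*) [CommRing O] [IsDomain O] [IsDiscreteValuationRing O]
    (π : O) (hπ : Irreducible π) (c₁ c₂ c₃ m : ℕ) (hm : 1 ≤ m)
    (hμ : m ≤ min (c₁ + c₂ - c₃) (min (c₃ - c₁) (c₃ - c₂))) :
    ∃ η : GL (Fin 3) O → BType (O ⧸ (Ideal.span {π} : Ideal O) ^ m),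
      (∀ g ∈ pSet π (c₁ - m) (c₂ - m) (c₃ - m), ∀ x y z : O,
        g.val 1 0 = π ^ (c₁ - m) * x → g.val 2 1 = π ^ (c₂ - m) * y →
        g.val 2 0 = π ^ (c₃ - m) * z →
          (η g).1 = (Ideal.Quotient.mk ((Ideal.span {π} : Ideal O) ^ m) x,
              Ideal.Quotient.mk ((Ideal.span {π} : Ideal O) ^ m) y,
              Ideal.Quotient.mk ((Ideal.span {π} : Ideal O) ^ m) z) ∧
            ((η g).2.1 : O ⧸ (Ideal.span {π} : Ideal O) ^ m) =
              Ideal.Quotient.mk ((Ideal.span {π} : Ideal O) ^ m) (g.val 0 0) ∧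
            ((η g).2.2.1 : O ⧸ (Ideal.span {π} : Ideal O) ^ m) =
              Ideal.Quotient.mk ((Ideal.span {π} : Ideal O) ^ m) (g.val 1 1) ∧
            ((η g).2.2.2 : O ⧸ (Ideal.span {π} : Ideal O) ^ m) =
              Ideal.Quotient.mk ((Ideal.span {π} : Ideal O) ^ m) (g.val 2 2)) ∧
      (∀ g ∈ pSet π (c₁ - m) (c₂ - m) (c₃ - m),
        ∀ h ∈ pSet π (c₁ - m) (c₂ - m) (c₃ - m),
          η (g * h) = bMul (Ideal.Quotient.mk ((Ideal.span {π} : Ideal O) ^ m)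
            (π ^ (c₁ + c₂ - c₃ - m))) (η g) (η h)) ∧
      (∀ b : BType (O ⧸ (Ideal.span {π} : Ideal O) ^ m),
        ∃ g ∈ pSet π (c₁ - m) (c₂ - m) (c₃ - m), η g = b) := by
  obtain ⟨hμ₁, hμ₂, hμ₃⟩ : m ≤ c₁ + c₂ - c₃ ∧ m ≤ c₃ - c₁ ∧ m ≤ c₃ - c₂ := by
    simpa only [le_min_iff] using hμ
  have hδ : c₁ + c₂ - c₃ - m = (c₁ - m) + (c₂ - m) - (c₃ - m) := by omega
  have hπm : Ideal.span {π} ^ m ≠ ⊤ := fun h ↦ hπ.not_isUnit <| Ideal.span_singleton_eq_top.mp <|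
    eq_top_iff.mpr (h ▸ Ideal.pow_le_self (by omega))
  refine ⟨eta π (c₁ - m) (c₂ - m) (c₃ - m) m, fun g hg x y z hx hy hz ↦ ?_,
    fun g hg h hh ↦ ?_, exists_mem_pSet_eta_eq hπ.ne_zero hπm⟩
  · exact ⟨eta_fst hπ.ne_zero hx hy hz, val_eta_snd
      (isUpperTriangular_map_mk_of_mem_pSet (by omega) (by omega) (by omega) hg)⟩
  · rw [hδ]
    exact eta_mul hπ.ne_zero (by omega) (by omega) (by omega) hg hh

/-- For `c` in the cone, `m ≥ 1` with `μ(c) ≥ m`, and `δ = π^{c₁+c₂−c₃−m} mod 𝔪^m`,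
the map `η` sending `g ∈ P_{c−mρ}` with diagonal `(t₁,t₂,t₃)`, `(2,1)`-entry
`π^{c₁−m}x`, `(3,1)`-entry `π^{c₃−m}z`, `(3,2)`-entry `π^{c₂−m}y` to
`((x̄,ȳ,z̄),(t̄₁,t̄₂,t̄₃)) ∈ B^δ_m` is a surjective group homomorphism from
`P_{c−mρ}` onto `B^δ_m`. -/
theorem stmt_14 (O : Type*) [CommRing O] [IsDomain O] [IsDiscreteValuationRing O]
    (π : O) (hπ : Irreducible π) (c₁ c₂ c₃ m : ℕ)
    (h1 : c₁ ≤ c₃) (h2 : c₂ ≤ c₃) (h3 : c₃ ≤ c₁ + c₂) (hm : 1 ≤ m)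
    (hμ : m ≤ min (c₁ + c₂ - c₃) (min (c₃ - c₁) (c₃ - c₂))) :
    ∃ η : GL (Fin 3) O → BType (O ⧸ (Ideal.span {π} : Ideal O) ^ m),
      (∀ g ∈ pSet π (c₁ - m) (c₂ - m) (c₃ - m), ∀ x y z : O,
        g.val 1 0 = π ^ (c₁ - m) * x → g.val 2 1 = π ^ (c₂ - m) * y →
        g.val 2 0 = π ^ (c₃ - m) * z →
          (η g).1 = (Ideal.Quotient.mk ((Ideal.span {π} : Ideal O) ^ m) x,
              Ideal.Quotient.mk ((Ideal.span {π} : Ideal O) ^ m) y,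
              Ideal.Quotient.mk ((Ideal.span {π} : Ideal O) ^ m) z) ∧
            ((η g).2.1 : O ⧸ (Ideal.span {π} : Ideal O) ^ m) =
              Ideal.Quotient.mk ((Ideal.span {π} : Ideal O) ^ m) (g.val 0 0) ∧
            ((η g).2.2.1 : O ⧸ (Ideal.span {π} : Ideal O) ^ m) =
              Ideal.Quotient.mk ((Ideal.span {π} : Ideal O) ^ m) (g.val 1 1) ∧
            ((η g).2.2.2 : O ⧸ (Ideal.span {π} : Ideal O) ^ m) =
              Ideal.Quotient.mk ((Ideal.span {π} : Ideal O) ^ m) (g.val 2 2)) ∧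
      (∀ g ∈ pSet π (c₁ - m) (c₂ - m) (c₃ - m),
        ∀ h ∈ pSet π (c₁ - m) (c₂ - m) (c₃ - m),
          η (g * h) = bMul (Ideal.Quotient.mk ((Ideal.span {π} : Ideal O) ^ m)
            (π ^ (c₁ + c₂ - c₃ - m))) (η g) (η h)) ∧
      (∀ b : BType (O ⧸ (Ideal.span {π} : Ideal O) ^ m),
        ∃ g ∈ pSet π (c₁ - m) (c₂ - m) (c₃ - m), η g = b) :=
  stmt_14_general O π hπ c₁ c₂ c₃ m hm hμ
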